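/- Let T be an infinite, locally finite rooted tree that is weakly uniformly transient. Then λ ↦ C(λ,T) is left continuous on (λ_c(T), 1]. -/

import Mathlib

open scoped Classical ENNReal
open Filter

/-- A rooted tree with vertex labels in `A`, modeled as a set of finite words over `A`
closed under taking initial segments. The root is the empty word `[]`, and the children
of a vertex `v` are the words `v ++ [a]` belonging to the tree. -/
structure RTree (A : Type*) where
  mem : Set (List A)
  root_mem : [] ∈ mem
  parent_mem : ∀ (v : List A) (a : A), v ++ [a] ∈ mem → v ∈ mem

namespace RTree

variable {A : Type*}

/-- The tree is locally finite: every vertex has finitely many children. -/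
def LocFin (T : RTree A) : Prop := ∀ v ∈ T.mem, {a : A | v ++ [a] ∈ T.mem}.Finite

/-- Number of children of a vertex. -/
noncomputable def numChildren (T : RTree A) (v : List A) : ℕ :=
  {a : A | v ++ [a] ∈ T.mem}.ncard

/-- Degree of a vertex (number of children, plus one for the parent except at the root). -/
noncomputable def degree (T : RTree A) (v : List A) : ℕ :=
  T.numChildren v + (if v = [] then 0 else 1)

/-- Number of vertices at generation `n`. -/
noncomputable def levelCard (T : RTree A) (n : ℕ) : ℕ :=
  {v ∈ T.mem | v.length = n}.ncard

/-- The subtree of descendants of `y`, rooted at `y`. -/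
def subtree (T : RTree A) (y : List A) : RTree A where
  mem := insert [] {l : List A | y ++ l ∈ T.mem}
  root_mem := Set.mem_insert _ _
  parent_mem := by
    intro v a hv
    rw [Set.mem_insert_iff] at hv
    rcases hv with h | h
    · exact absurd h (by simp)
    · exact Set.mem_insert_iff.mpr <| Or.inr <|
        T.parent_mem (y ++ v) a (by simpa [List.append_assoc] using h)

/-- One-step transition probabilities of the `λ`-biased random walk `RW_λ`:
from a non-root vertex with `k` children, move to the parent with probability
`1/(1+kλ)` and to each child with probability `λ/(1+kλ)`; from the root, move
to each of its children with equal probability. -/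
noncomputable def step (T : RTree A) (lam : ℝ) (x y : List A) : ℝ :=
  if x ∈ T.mem ∧ y ∈ T.mem then
    if ∃ a : A, y = x ++ [a] then
      if x = [] then 1 / (T.numChildren x : ℝ)
      else lam / (1 + (T.numChildren x : ℝ) * lam)
    else if x ≠ [] ∧ y = x.dropLast then 1 / (1 + (T.numChildren x : ℝ) * lam)
    else 0
  else 0

/-- Probability of a finite trajectory (product of one-step transition probabilities). -/
noncomputable def pathProb (T : RTree A) (lam : ℝ) : List (List A) → ℝ
  | [] => 1
  | [_] => 1
  | x :: y :: r => T.step lam x y * pathProb T lam (y :: r)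

/-- Probability that the walk started at the root satisfies the constraint `P i` at
every time `0 ≤ i ≤ M`. -/
noncomputable def cylProb (T : RTree A) (lam : ℝ) (M : ℕ) (P : ℕ → List A → Prop) : ℝ :=
  ∑' l : {l : List (List A) // l.length = M + 1 ∧ l.head? = some ([] : List A) ∧
      ∀ (i : ℕ) (h : i < l.length), P i (l.get ⟨i, h⟩)},
    T.pathProb lam l.1

/-- Probability that the walk started at the root never returns to the root
(the decreasing limit over `M` of the probabilities of no return up to time `M`). -/
noncomputable def escProb (T : RTree A) (lam : ℝ) : ℝ :=
  ⨅ M : ℕ, T.cylProb lam M fun i v => i ≠ 0 → v ≠ []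

/-- Probability that the walk started at the root moves to `y` at its first step and
never returns to the root. -/
noncomputable def escProbVia (T : RTree A) (lam : ℝ) (y : List A) : ℝ :=
  ⨅ M : ℕ, T.cylProb lam M fun i v => (i ≠ 0 → v ≠ []) ∧ (i = 1 → v = y)

/-- `RW_λ` is recurrent: started at the root, it returns to the root almost surely. -/
def Recurrent (T : RTree A) (lam : ℝ) : Prop := T.escProb lam = 0

/-- `RW_λ` is transient: started at the root, it fails to return with positive probability. -/
def Transient (T : RTree A) (lam : ℝ) : Prop := 0 < T.escProb lam

/-- Effective conductance `C(λ,T) = λ·deg(o)·P(no return to the root)`. -/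
noncomputable def conductance (T : RTree A) (lam : ℝ) : ℝ :=
  lam * (T.numChildren ([] : List A) : ℝ) * T.escProb lam

/-- Law of the limit walk: `phi T lam y` is the probability that the walk eventually
stays in the subtree above `y`, i.e. that the limit walk `ω_λ^∞` passes through `y`
(equivalently, `ω_λ^∞(i) = y.take i` for all `i ≤ y.length`). -/
noncomputable def phi (T : RTree A) (lam : ℝ) (y : List A) : ℝ :=
  ⨆ N : ℕ, ⨅ M : ℕ, T.cylProb lam (N + M) fun i v => N ≤ i → y <+: v

/-- An infinite simple path from the root. -/
def IsRay (T : RTree A) (r : ℕ → List A) : Prop :=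
  r 0 = [] ∧ ∀ n, r n ∈ T.mem ∧ ∃ a : A, r (n + 1) = r n ++ [a]

/-- An edge-cutset, each edge being recorded by its endpoint farther from the root:
every infinite simple path from the root uses one of these edges. -/
def IsECutset (T : RTree A) (c : Set (List A)) : Prop :=
  (∀ v ∈ c, v ∈ T.mem ∧ v ≠ []) ∧ ∀ r, T.IsRay r → ∃ n, r (n + 1) ∈ c

/-- A vertex-cutset: every infinite simple path from the root meets it. -/
def IsVCutset (T : RTree A) (c : Set (List A)) : Prop :=
  (∀ v ∈ c, v ∈ T.mem) ∧ ∀ r, T.IsRay r → ∃ n, r n ∈ c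

/-- The branching number `br(T) = sup {λ ≥ 1 : inf over cutsets c of Σ_{e∈c} λ^{-|e|} > 0}`. -/
noncomputable def br (T : RTree A) : ℝ :=
  sSup {lam : ℝ | 1 ≤ lam ∧
    0 < ⨅ (c : Set (List A)) (_ : T.IsECutset c),
      ∑' e : c, ENNReal.ofReal (lam⁻¹ ^ (e : List A).length)}

/-- The critical parameter `λ_c(T) = 1 / br(T)`. -/
noncomputable def lambdaC (T : RTree A) : ℝ := 1 / T.br

/-- Spherically symmetric tree: the degree of a vertex depends only on its generation. -/
def SphSymm (T : RTree A) : Prop :=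
  ∀ v ∈ T.mem, ∀ w ∈ T.mem, v.length = w.length → T.numChildren v = T.numChildren w

/-- Uniformly transient tree. -/
def UniformlyTransient (T : RTree A) : Prop :=
  ∀ lam : ℝ, T.lambdaC < lam → ∃ α > (0 : ℝ), ∀ v ∈ T.mem, α ≤ (T.subtree v).escProb lam

/-- Weakly uniformly transient tree. -/
def WeaklyUniformlyTransient (T : RTree A) : Prop :=
  ∃ c : ℕ → Set (List A),
    (∀ n, T.IsVCutset (c n) ∧ (c n).Finite) ∧
    (Pairwise fun i j => Disjoint (c i) (c j)) ∧
    ∀ lam : ℝ, T.lambdaC < lam → ∃ α > (0 : ℝ), ∀ n, ∀ v ∈ c n, α ≤ (T.subtree v).escProb lam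

/-- Vertices of the periodic tree `T^{∞,F}` obtained by repeatedly grafting a copy of
the finite tree `F` at every leaf: a word belongs to it iff it is a concatenation of
root-to-leaf words of `F` followed by a word of `F`. -/
inductive GraftMem (F : RTree A) : List A → Prop
  | base (v : List A) (hv : v ∈ F.mem) : GraftMem F v
  | graft (v w : List A) (hv : v ∈ F.mem) (hne : v ≠ []) (hleaf : F.numChildren v = 0)
      (hw : GraftMem F w) : GraftMem F (v ++ w)

/-- The periodic tree `T^{∞,F}`. -/
def periodicTree (F : RTree A) : RTree A where
  mem := {l | GraftMem F l}
  root_mem := GraftMem.base [] F.root_mem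
  parent_mem := by
    have H : ∀ l, GraftMem F l → ∀ (v : List A) (a : A), l = v ++ [a] → GraftMem F v := by
      intro l hl
      induction hl with
      | base v hv =>
          intro u a h
          subst h
          exact GraftMem.base u (F.parent_mem u a hv)
      | graft v w hv hne hleaf hw ih =>
          intro u a h
          rcases w.eq_nil_or_concat' with hwnil | ⟨w', b, hww⟩
          · subst hwnil
            rw [List.append_nil] at h
            subst h
            exact GraftMem.base u (F.parent_mem u a hv)
          · subst hww
            rw [← List.append_assoc] at h
            have h2 := congrArg List.dropLast h
            simp only [List.dropLast_concat] at h2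
            subst h2
            exact GraftMem.graft v w' hv hne hleaf (ih w' b rfl)
    exact fun v a hva => H (v ++ [a]) hva v a rfl

end RTree

/-- The class `A_m` of infinite, locally finite, spherically symmetric rooted trees
all of whose vertices have degree at most `m`. -/
def MemAm (m : ℕ) (T : RTree ℕ) : Prop :=
  T.mem.Infinite ∧ T.LocFin ∧ T.SphSymm ∧ ∀ v ∈ T.mem, T.degree v ≤ m

/-- The set `F_m` of effective-conductance functions of trees in `A_m`. -/
def Fm (m : ℕ) : Set (ℝ → ℝ) :=
  {f | ContinuousOn f (Set.Icc 0 1) ∧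
    ∃ T : RTree ℕ, MemAm m T ∧ ∀ lam ∈ Set.Ioc (0 : ℝ) 1, f lam = T.conductance lam}

namespace SAW

/-- Nearest-neighbour adjacency on `ℤ²`. -/
def Adj (x y : ℤ × ℤ) : Prop :=
  (x.1 = y.1 ∧ (x.2 = y.2 + 1 ∨ x.2 + 1 = y.2)) ∨
  (x.2 = y.2 ∧ (x.1 = y.1 + 1 ∨ x.1 + 1 = y.1))

/-- `l` is the list of successive positions, after the origin, of a self-avoiding
walk starting at the origin and staying in the region `S`. -/
def SAWIn (S : Set (ℤ × ℤ)) (l : List (ℤ × ℤ)) : Prop :=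
  List.Chain' Adj ((0, 0) :: l) ∧ ((0, 0) :: l).Nodup ∧ ∀ p ∈ l, p ∈ S

/-- The self-avoiding tree of the region `S`: its vertices are the finite
self-avoiding walks in `S` starting at the origin, two walks being adjacent when
one is a one-step extension of the other. -/
def sawTree (S : Set (ℤ × ℤ)) : RTree (ℤ × ℤ) where
  mem := {l | SAWIn S l}
  root_mem := by exact ⟨List.isChain_singleton _, List.nodup_singleton _, by simp⟩
  parent_mem := by
    intro v a hv
    obtain ⟨h1, h2, h3⟩ := hv
    have hpre : ((0, 0) :: v) <+: ((0, 0) :: (v ++ [a])) := ⟨[a], by simp⟩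
    refine ⟨?_, h2.sublist hpre.sublist, fun p hp => h3 p (by simp [hp])⟩
    have h1' : (((0, 0) :: v) ++ [a]).Chain' Adj := by simpa using h1
    exact (List.isChain_append.mp h1').1

/-- The upper half-plane `ℍ = ℤ × ℤ_{≥0}`. -/
def HH : Set (ℤ × ℤ) := {z | 0 ≤ z.2}

/-- The quadrant `ℚ = ℤ_{≥0} × ℤ_{≥0}`. -/
def QQ : Set (ℤ × ℤ) := {z | 0 ≤ z.1 ∧ 0 ≤ z.2}

/-- Number of self-avoiding walks of length `n` in `ℤ²` starting at the origin. -/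
noncomputable def cSAW (n : ℕ) : ℕ :=
  {l : List (ℤ × ℤ) | l.length = n ∧ SAWIn Set.univ l}.ncard

/-- The connective constant `μ = lim cₙ^{1/n}` of `ℤ²`; by Fekete's subadditive lemma
the limit exists and equals the infimum over `n ≥ 1` of `cₙ^{1/n}`. -/
noncomputable def mu : ℝ := ⨅ n : ℕ, (cSAW (n + 1) : ℝ) ^ (((n : ℝ) + 1)⁻¹)

/-- Endpoint in `ℤ²` of the finite self-avoiding walk recorded by `l`. -/
def endpt (l : List (ℤ × ℤ)) : ℤ × ℤ := l.getLast?.getD (0, 0)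

/-- `l` is a bridge of the horizontal strip `{z : 0 ≤ Im z ≤ ℓ}`: a self-avoiding
walk of the strip starting at the origin with `γ₁(0) < γ₁(i) ≤ γ₁(n)` for `1 ≤ i ≤ n`. -/
def IsStripBridge (width : ℕ) (l : List (ℤ × ℤ)) : Prop :=
  SAWIn {z : ℤ × ℤ | 0 ≤ z.2 ∧ z.2 ≤ (width : ℤ)} l ∧
  ∀ p ∈ l, 0 < p.1 ∧ p.1 ≤ (endpt l).1

/-- `p^{(ℓ)}_n`, the number of `n`-step bridges of the strip of width `ℓ`. -/
noncomputable def stripBridgeCount (width n : ℕ) : ℕ :=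
  {l : List (ℤ × ℤ) | l.length = n ∧ IsStripBridge width l}.ncard

end SAW


/-!
The escape probability `escProb p` is the decreasing limit of the probabilities
`noReturnProb p M` of not returning to the root up to time `M`; each of them is continuous in
`p`, and `escProb` is nondecreasing in `p`. Left continuity at `λ > λ_c` therefore follows once
the convergence is uniform for `p ∈ [p₀, λ]`, where `λ_c < p₀ < λ`.

Fix `n` cutsets of the weakly uniformly transient family, none containing the root. A return
to the root after a late time `M` requires that the walk either is still, at time `M`, in the
finite set `B` of vertices not yet separated from the root by all `n` cutsets, or returns from
outside `B`. The first is unlikely because from each vertex of `B` the walk runs straight to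
the root with probability bounded below. For the second, from a cutset vertex `u` the walk
escapes into `T^u` with probability at least `β > 0`, uniformly in `p ≥ p₀`, so crossing each
of the `n` cutsets on the way back costs a factor `1 - β`.
-/

lemma continuousWithinAt_Iic_of_uniform_approx {f : ℝ → ℝ} {g : ℕ → ℝ → ℝ} {a b : ℝ}
    (hab : a < b) (hmono : ∀ x ∈ Set.Icc a b, f x ≤ f b) (hg : ∀ M, ContinuousAt (g M) b)
    (hfg : ∀ M, f b ≤ g M b) (happrox : ∀ ε > 0, ∃ M, ∀ x ∈ Set.Icc a b, g M x - ε ≤ f x) :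
    ContinuousWithinAt f (Set.Iic b) b := by
  refine Metric.continuousWithinAt_iff.mpr fun ε hε => ?_
  obtain ⟨M, hM⟩ := happrox (ε / 2) (half_pos hε)
  obtain ⟨δ, hδ, hgδ⟩ := Metric.continuousAt_iff.mp (hg M) (ε / 2) (half_pos hε)
  refine ⟨min δ (b - a), lt_min hδ (sub_pos.mpr hab), fun x hxb hx => ?_⟩
  have hxa : a ≤ x := by
    rw [Real.dist_eq, abs_lt] at hx
    linarith [min_le_right δ (b - a)]
  have hxab : x ∈ Set.Icc a b := ⟨hxa, hxb⟩
  have hgx := hgδ (hx.trans_le (min_le_left δ (b - a)))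
  rw [Real.dist_eq, abs_lt] at hgx ⊢
  constructor <;> linarith [hM x hxab, hmono x hxab, hfg M]

namespace RTree

variable {A : Type*} {T : RTree A} {hT : T.LocFin} {p : ℝ}

section Neighbours

lemma dropLast_mem {x : List A} (hx : x ∈ T.mem) (hne : x ≠ []) : x.dropLast ∈ T.mem :=
  T.parent_mem x.dropLast (x.getLast hne) (by rwa [List.dropLast_append_getLast hne])

lemma mem_of_prefix {u v : List A} (hv : v ∈ T.mem) (huv : u <+: v) : u ∈ T.mem := by
  induction v using List.reverseRecOn with
  | nil => rwa [List.prefix_nil.mp huv]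
  | append_singleton w a ih =>
    rcases List.prefix_concat_iff.mp huv with rfl | huw
    · exact hv
    · exact ih (T.parent_mem w a hv) huw

variable (T hT) in
noncomputable def childF (x : List A) : Finset (List A) :=
  if hx : x ∈ T.mem then (hT x hx).toFinset.image (fun a => x ++ [a]) else ∅

variable (T hT) in
noncomputable def nbrF (x : List A) : Finset (List A) :=
  childF T hT x ∪ (if x = [] then ∅ else {x.dropLast})

lemma mem_childF {x y : List A} :
    y ∈ childF T hT x ↔ ∃ a : A, x ++ [a] ∈ T.mem ∧ y = x ++ [a] := by
  unfold childF
  split_ifs with hx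
  · simp [eq_comm]
  · simp only [Finset.notMem_empty, false_iff, not_exists, not_and]
    exact fun a ha _ => hx (T.parent_mem x a ha)

lemma mem_of_mem_childF {x y : List A} (h : y ∈ childF T hT x) : y ∈ T.mem := by
  obtain ⟨a, ha, rfl⟩ := mem_childF.mp h
  exact ha

lemma card_childF {x : List A} (hx : x ∈ T.mem) : (childF T hT x).card = T.numChildren x := by
  rw [childF, dif_pos hx, Finset.card_image_of_injective _ (fun a b h => by simpa using h),
    numChildren, Set.ncard_eq_toFinset_card _ (hT x hx)]

lemma dropLast_notMem_childF {x : List A} (hne : x ≠ []) : x.dropLast ∉ childF T hT x := by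
  intro h
  obtain ⟨a, -, ha⟩ := mem_childF.mp h
  have := congrArg List.length ha
  have := List.length_pos_iff.mpr hne
  simp only [List.length_dropLast, List.length_append, List.length_singleton] at *
  omega

lemma mem_nbrF {x y : List A} :
    y ∈ nbrF T hT x ↔ y ∈ childF T hT x ∨ (x ≠ [] ∧ y = x.dropLast) := by
  unfold nbrF
  split_ifs with hx <;> simp [hx, or_comm]

lemma nbrF_nil : nbrF T hT [] = childF T hT [] := by
  simp [nbrF]

lemma ne_of_mem_nbrF_nil {y : List A} (h : y ∈ nbrF T hT []) : y ≠ [] := by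
  obtain ⟨a, -, rfl⟩ := mem_childF.mp (nbrF_nil ▸ h)
  simp

lemma mem_of_mem_nbrF {x y : List A} (hx : x ∈ T.mem) (h : y ∈ nbrF T hT x) : y ∈ T.mem := by
  rcases mem_nbrF.mp h with h | ⟨hne, rfl⟩
  · exact mem_of_mem_childF h
  · exact dropLast_mem hx hne

lemma prefix_dropLast_of_ne {u x : List A} (hux : u <+: x) (hne : u ≠ x) : u <+: x.dropLast := by
  have hx : x ≠ [] := by rintro rfl; exact hne (List.prefix_nil.mp hux)
  rw [← List.dropLast_concat_getLast hx] at hux hne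
  exact (List.prefix_concat_iff.mp hux).resolve_left hne

lemma ne_dropLast_of_prefix {u x : List A} (hne : u ≠ []) (hux : u <+: x) : x ≠ u.dropLast := by
  rintro rfl
  have := hux.length_le
  have := List.length_pos_iff.mpr hne
  rw [List.length_dropLast] at *
  omega

lemma prefix_or_eq_of_mem_nbrF {u x y : List A} (hux : u <+: x) (hy : y ∈ nbrF T hT x) :
    u <+: y ∨ (x = u ∧ y = u.dropLast) := by
  rcases mem_nbrF.mp hy with hy | ⟨-, rfl⟩
  · obtain ⟨a, -, rfl⟩ := mem_childF.mp hy
    exact Or.inl (hux.trans (List.prefix_append x [a]))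
  · by_cases hxu : u = x
    · exact Or.inr ⟨hxu.symm, hxu ▸ rfl⟩
    · exact Or.inl (prefix_dropLast_of_ne hux hxu)

lemma sum_nbrF {x : List A} (hne : x ≠ []) (f : List A → ℝ) :
    ∑ y ∈ nbrF T hT x, f y = f x.dropLast + ∑ y ∈ childF T hT x, f y := by
  rw [nbrF, if_neg hne, Finset.sum_union (Finset.disjoint_singleton_right.mpr
    (dropLast_notMem_childF hne)), Finset.sum_singleton, add_comm]

end Neighbours

section Step

lemma step_child {x : List A} {a : A} (hxa : x ++ [a] ∈ T.mem) (hne : x ≠ []) :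
    T.step p x (x ++ [a]) = p / (1 + T.numChildren x * p) := by
  rw [step, if_pos ⟨T.parent_mem x a hxa, hxa⟩, if_pos ⟨a, rfl⟩, if_neg hne]

lemma step_root_child {a : A} (ha : [a] ∈ T.mem) :
    T.step p [] [a] = 1 / T.numChildren ([] : List A) := by
  rw [step, if_pos ⟨T.root_mem, ha⟩, if_pos ⟨a, rfl⟩, if_pos rfl]

lemma step_parent {x : List A} (hx : x ∈ T.mem) (hne : x ≠ []) :
    T.step p x x.dropLast = 1 / (1 + T.numChildren x * p) := by
  have hnot : ¬∃ a : A, x.dropLast = x ++ [a] := by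
    rintro ⟨a, ha⟩
    have := congrArg List.length ha
    simp only [List.length_dropLast, List.length_append, List.length_singleton] at this
    omega
  rw [step, if_pos ⟨hx, dropLast_mem hx hne⟩, if_neg hnot, if_pos ⟨hne, rfl⟩]

variable (T) in
lemma step_nonneg (hp : 0 ≤ p) (x y : List A) : 0 ≤ T.step p x y := by
  unfold step
  split_ifs <;> positivity

lemma step_eq_zero_of_notMem_nbrF {x y : List A} (h : y ∉ nbrF T hT x) : T.step p x y = 0 := by
  unfold step
  split_ifs with h1 h2 _ h4 <;> try rfl
  all_goals exfalso; apply h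
  · obtain ⟨a, rfl⟩ := h2
    exact Finset.mem_union_left _ (mem_childF.mpr ⟨a, h1.2, rfl⟩)
  · obtain ⟨a, rfl⟩ := h2
    exact Finset.mem_union_left _ (mem_childF.mpr ⟨a, h1.2, rfl⟩)
  · exact mem_nbrF.mpr (Or.inr h4)

lemma step_of_notMem {x y : List A} (hx : x ∉ T.mem) : T.step p x y = 0 := by
  rw [step, if_neg (fun h => hx h.1)]

lemma sum_step_eq_one (hp : 0 ≤ p) {x : List A} (hx : x ∈ T.mem) (hne : x ≠ []) :
    ∑ y ∈ nbrF T hT x, T.step p x y = 1 := by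
  have hchild : ∀ y ∈ childF T hT x, T.step p x y = p / (1 + T.numChildren x * p) := by
    intro y hy
    obtain ⟨a, ha, rfl⟩ := mem_childF.mp hy
    exact step_child ha hne
  rw [sum_nbrF hne, Finset.sum_congr rfl hchild, Finset.sum_const, card_childF hx,
    step_parent hx hne, nsmul_eq_mul]
  have : 0 < 1 + T.numChildren x * p := by positivity
  field_simp

lemma sum_step_le_one (hp : 0 ≤ p) (x : List A) : ∑ y ∈ nbrF T hT x, T.step p x y ≤ 1 := by
  by_cases hx : x ∈ T.mem
  · rcases eq_or_ne x [] with rfl | hne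
    · have hchild : ∀ y ∈ childF T hT [], T.step p [] y = 1 / T.numChildren ([] : List A) := by
        intro y hy
        obtain ⟨a, ha, rfl⟩ := mem_childF.mp hy
        exact step_root_child ha
      rw [nbrF_nil, Finset.sum_congr rfl hchild, Finset.sum_const, card_childF hx, nsmul_eq_mul]
      by_cases h : (T.numChildren ([] : List A) : ℝ) = 0 <;> simp [h]
    · exact (sum_step_eq_one hp hx hne).le
  · simp [step_of_notMem hx]

lemma step_parent_add_sum_children_le (hp : 0 ≤ p) {x : List A} (hne : x ≠ []) :
    T.step p x x.dropLast + ∑ c ∈ childF T hT x, T.step p x c ≤ 1 := by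
  rw [← sum_nbrF hne]
  exact sum_step_le_one hp x

end Step

section StepExpect

variable (T hT p) in
noncomputable def stepExpect (f : List A → ℝ) (x : List A) : ℝ :=
  ∑ y ∈ nbrF T hT x, T.step p x y * f y

lemma stepExpect_mono (hp : 0 ≤ p) {f g : List A → ℝ} {x : List A}
    (h : ∀ y ∈ nbrF T hT x, f y ≤ g y) : stepExpect T hT p f x ≤ stepExpect T hT p g x :=
  Finset.sum_le_sum fun y hy => mul_le_mul_of_nonneg_left (h y hy) (step_nonneg T hp x y)

lemma stepExpect_nonneg (hp : 0 ≤ p) {f : List A → ℝ} {x : List A}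
    (h : ∀ y ∈ nbrF T hT x, 0 ≤ f y) : 0 ≤ stepExpect T hT p f x :=
  Finset.sum_nonneg fun y hy => mul_nonneg (step_nonneg T hp x y) (h y hy)

lemma stepExpect_const (c : ℝ) (x : List A) :
    stepExpect T hT p (fun _ => c) x = (∑ y ∈ nbrF T hT x, T.step p x y) * c :=
  (Finset.sum_mul _ _ _).symm

lemma stepExpect_le (hp : 0 ≤ p) {f : List A → ℝ} {x : List A} {c : ℝ} (hc : 0 ≤ c)
    (h : ∀ y ∈ nbrF T hT x, f y ≤ c) : stepExpect T hT p f x ≤ c :=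
  calc stepExpect T hT p f x ≤ stepExpect T hT p (fun _ => c) x := stepExpect_mono hp h
    _ ≤ c := by
      rw [stepExpect_const]
      exact mul_le_of_le_one_left hc (sum_step_le_one hp x)

lemma stepExpect_add (f g : List A → ℝ) (x : List A) :
    stepExpect T hT p (fun y => f y + g y) x = stepExpect T hT p f x + stepExpect T hT p g x := by
  simp only [stepExpect, mul_add, Finset.sum_add_distrib]

lemma stepExpect_sub (f g : List A → ℝ) (x : List A) :
    stepExpect T hT p (fun y => f y - g y) x = stepExpect T hT p f x - stepExpect T hT p g x := by
  simp only [stepExpect, mul_sub, Finset.sum_sub_distrib]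

lemma stepExpect_mul_const (f : List A → ℝ) (c : ℝ) (x : List A) :
    stepExpect T hT p (fun y => f y * c) x = stepExpect T hT p f x * c := by
  simp only [stepExpect, ← mul_assoc, Finset.sum_mul]

lemma stepExpect_one_sub (hp : 0 ≤ p) {x : List A} (hx : x ∈ T.mem) (hne : x ≠ [])
    (f : List A → ℝ) : stepExpect T hT p (fun y => 1 - f y) x = 1 - stepExpect T hT p f x := by
  rw [stepExpect_sub, stepExpect_const, sum_step_eq_one hp hx hne, one_mul]

lemma stepExpect_eq_parent_add_children {x : List A} (hne : x ≠ []) (f : List A → ℝ) :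
    stepExpect T hT p f x
      = T.step p x x.dropLast * f x.dropLast + ∑ c ∈ childF T hT x, T.step p x c * f c :=
  sum_nbrF hne _

end StepExpect

section PathSums

variable (T p) in
noncomputable def noReturnProb (M : ℕ) : ℝ := T.cylProb p M fun i v => i ≠ 0 → v ≠ []

def IsNoReturnPath (j : ℕ) (x : List A) (l : List (List A)) : Prop :=
  l.length = j + 1 ∧ l.head? = some x ∧ ∀ (i : ℕ) (h : i < l.length), i ≠ 0 → l.get ⟨i, h⟩ ≠ []

lemma isNoReturnPath_zero {x : List A} {l : List (List A)} : IsNoReturnPath 0 x l ↔ l = [x] := by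
  constructor
  · rintro ⟨hlen, hhead, -⟩
    match l, hlen with
    | [z], _ => simpa using hhead
  · rintro rfl
    exact ⟨rfl, rfl, fun i h hi => absurd (Nat.lt_one_iff.mp h) hi⟩

lemma isNoReturnPath_succ {j : ℕ} {x : List A} {l : List (List A)} :
    IsNoReturnPath (j + 1) x l ↔
      ∃ y r, l = x :: y :: r ∧ y ≠ [] ∧ IsNoReturnPath j y (y :: r) := by
  constructor
  · rintro ⟨hlen, hhead, hl⟩
    match l, hlen with
    | z :: y :: r, hlen =>
      obtain rfl : z = x := by simpa using hhead
      refine ⟨y, r, rfl, by simpa using hl 1 (by simp) one_ne_zero,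
        by simpa using hlen, rfl, fun i h hi => ?_⟩
      simpa using hl (i + 1) (by simpa using h) (Nat.succ_ne_zero i)
  · rintro ⟨y, r, rfl, hy, hlen, -, hl⟩
    refine ⟨by simpa using hlen, rfl, fun i h hi => ?_⟩
    match i with
    | 1 => simpa using hy
    | i + 2 => simpa using hl (i + 1) (by simpa using h) (Nat.succ_ne_zero i)

variable (T hT) in
noncomputable def noReturnPaths : ℕ → List A → Finset (List (List A))
  | 0, x => {[x]}
  | j + 1, x => ((nbrF T hT x).filter (· ≠ [])).biUnion
      fun y => (noReturnPaths j y).image (List.cons x)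

variable (T p) in
noncomputable def noReturnSum (j : ℕ) (x : List A) : ℝ :=
  ∑' l : {l // IsNoReturnPath j x l}, T.pathProb p l.1

lemma noReturnProb_eq_noReturnSum (M : ℕ) : T.noReturnProb p M = T.noReturnSum p M [] := rfl

lemma isNoReturnPath_of_mem_noReturnPaths :
    ∀ {j : ℕ} {x : List A} {l : List (List A)},
      l ∈ noReturnPaths T hT j x → IsNoReturnPath j x l
  | 0, x, l, hl => isNoReturnPath_zero.mpr (Finset.mem_singleton.mp hl)
  | j + 1, x, l, hl => by
    simp only [noReturnPaths, Finset.mem_biUnion, Finset.mem_filter, Finset.mem_image] at hl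
    obtain ⟨y, ⟨-, hy⟩, l', hl', rfl⟩ := hl
    have hpath := isNoReturnPath_of_mem_noReturnPaths hl'
    match l', hpath with
    | z :: r, hpath =>
      obtain rfl : z = y := by simpa using hpath.2.1
      exact isNoReturnPath_succ.mpr ⟨z, r, rfl, hy, hpath⟩

lemma mem_noReturnPaths_of_pathProb_ne_zero :
    ∀ {j : ℕ} {x : List A} {l : List (List A)},
      IsNoReturnPath j x l → T.pathProb p l ≠ 0 → l ∈ noReturnPaths T hT j x
  | 0, x, l, hl, _ => Finset.mem_singleton.mpr (isNoReturnPath_zero.mp hl)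
  | j + 1, x, l, hl, hne => by
    obtain ⟨y, r, rfl, hy, hpath⟩ := isNoReturnPath_succ.mp hl
    rw [pathProb, mul_ne_zero_iff] at hne
    simp only [noReturnPaths, Finset.mem_biUnion, Finset.mem_filter, Finset.mem_image]
    refine ⟨y, ⟨?_, hy⟩, y :: r, mem_noReturnPaths_of_pathProb_ne_zero hpath hne.2, rfl⟩
    by_contra hy'
    exact hne.1 (step_eq_zero_of_notMem_nbrF hy')

lemma noReturnSum_eq_sum (j : ℕ) (x : List A) :
    T.noReturnSum p j x = ∑ l ∈ noReturnPaths T hT j x, T.pathProb p l := by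
  rw [noReturnSum, tsum_eq_sum (s := (noReturnPaths T hT j x).subtype (IsNoReturnPath j x))
      fun l hl => by_contra fun hne => hl (Finset.mem_subtype.mpr
        (mem_noReturnPaths_of_pathProb_ne_zero l.2 hne)),
    Finset.sum_subtype_of_mem (fun l => T.pathProb p l)
      fun l hl => isNoReturnPath_of_mem_noReturnPaths hl]

lemma noReturnSum_zero (hT : T.LocFin) (x : List A) : T.noReturnSum p 0 x = 1 := by
  rw [noReturnSum_eq_sum (hT := hT), noReturnPaths, Finset.sum_singleton, pathProb]

lemma noReturnSum_succ (hT : T.LocFin) (j : ℕ) (x : List A) :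
    T.noReturnSum p (j + 1) x
      = ∑ y ∈ (nbrF T hT x).filter (· ≠ []), T.step p x y * T.noReturnSum p j y := by
  have hdisj : Set.PairwiseDisjoint ↑((nbrF T hT x).filter (· ≠ []))
      fun y => (noReturnPaths T hT j y).image (List.cons x) := by
    intro y₁ _ y₂ _ hne
    refine Finset.disjoint_left.mpr fun l h₁ h₂ => hne ?_
    simp only [Finset.mem_image] at h₁ h₂
    obtain ⟨l₁, hl₁, rfl⟩ := h₁
    obtain ⟨l₂, hl₂, h⟩ := h₂
    obtain rfl : l₂ = l₁ := List.cons_injective h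
    simpa [(isNoReturnPath_of_mem_noReturnPaths hl₁).2.1] using
      (isNoReturnPath_of_mem_noReturnPaths hl₂).2.1
  rw [noReturnSum_eq_sum (hT := hT), noReturnPaths, Finset.sum_biUnion hdisj]
  refine Finset.sum_congr rfl fun y _ => ?_
  rw [Finset.sum_image fun _ _ _ _ h => List.cons_injective h, noReturnSum_eq_sum (hT := hT),
    Finset.mul_sum]
  refine Finset.sum_congr rfl fun l hl => ?_
  match l, isNoReturnPath_of_mem_noReturnPaths hl with
  | z :: r, hpath =>
    obtain rfl : z = y := by simpa using hpath.2.1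
    rfl

end PathSums

section Avoid

lemma stepExpect_eq_div (hp : 0 ≤ p) {x : List A} (hx : x ∈ T.mem) (hne : x ≠ [])
    (f : List A → ℝ) : stepExpect T hT p f x
      = (f x.dropLast + p * ∑ c ∈ childF T hT x, f c) / (1 + T.numChildren x * p) := by
  have hchild : ∀ c ∈ childF T hT x,
      T.step p x c * f c = p / (1 + T.numChildren x * p) * f c := by
    intro c hc
    obtain ⟨a, ha, rfl⟩ := mem_childF.mp hc
    rw [step_child ha hne]
  have : 0 < 1 + T.numChildren x * p := by positivity
  rw [stepExpect_eq_parent_add_children hne, Finset.sum_congr rfl hchild, ← Finset.mul_sum,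
    step_parent hx hne]
  field_simp

variable (T hT p) in
/-- Probability that `RW_p` started at `x` stays away from `u` at all times `0, …, j`. -/
noncomputable def avoidProb (u : List A) : ℕ → List A → ℝ
  | 0, x => if x = u then 0 else 1
  | j + 1, x => if x = u then 0 else stepExpect T hT p (avoidProb u j) x

@[simp]
lemma avoidProb_self (u : List A) (j : ℕ) : avoidProb T hT p u j u = 0 := by
  cases j <;> simp [avoidProb]

lemma avoidProb_zero {u x : List A} (h : x ≠ u) : avoidProb T hT p u 0 x = 1 := by
  simp [avoidProb, h]

lemma avoidProb_succ {u x : List A} (h : x ≠ u) (j : ℕ) :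
    avoidProb T hT p u (j + 1) x = stepExpect T hT p (avoidProb T hT p u j) x := by
  simp [avoidProb, h]

lemma avoidProb_nonneg (hp : 0 ≤ p) (u : List A) :
    ∀ (j : ℕ) (x : List A), 0 ≤ avoidProb T hT p u j x
  | 0, x => by unfold avoidProb; split_ifs <;> norm_num
  | j + 1, x => by
    unfold avoidProb
    split_ifs
    · rfl
    · exact stepExpect_nonneg hp fun y _ => avoidProb_nonneg hp u j y

lemma avoidProb_le_one (hp : 0 ≤ p) (u : List A) :
    ∀ (j : ℕ) (x : List A), avoidProb T hT p u j x ≤ 1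
  | 0, x => by unfold avoidProb; split_ifs <;> norm_num
  | j + 1, x => by
    unfold avoidProb
    split_ifs
    · exact zero_le_one
    · exact stepExpect_le hp zero_le_one fun y _ => avoidProb_le_one hp u j y

lemma avoidProb_succ_le (hp : 0 ≤ p) (u : List A) :
    ∀ (j : ℕ) (x : List A), avoidProb T hT p u (j + 1) x ≤ avoidProb T hT p u j x
  | 0, x => by
    rcases eq_or_ne x u with rfl | hx
    · simp
    · rw [avoidProb_zero hx]
      exact avoidProb_le_one hp u 1 x
  | j + 1, x => by
    rcases eq_or_ne x u with rfl | hx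
    · simp
    · rw [avoidProb_succ hx, avoidProb_succ hx]
      exact stepExpect_mono hp fun y _ => avoidProb_succ_le hp u j y

lemma avoidProb_antitone (hp : 0 ≤ p) (u x : List A) :
    Antitone fun j => avoidProb T hT p u j x :=
  antitone_nat_of_succ_le fun j => avoidProb_succ_le hp u j x

lemma avoidProb_nil_eq_noReturnSum (j : ℕ) :
    ∀ {x : List A}, x ≠ [] → avoidProb T hT p [] j x = T.noReturnSum p j x := by
  induction j with
  | zero => intro x hx; rw [avoidProb_zero hx, noReturnSum_zero hT]
  | succ j ih =>
    intro x hx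
    rw [avoidProb_succ hx, noReturnSum_succ hT, stepExpect,
      ← Finset.sum_filter_add_sum_filter_not (nbrF T hT x) (· ≠ [])]
    have hroot : ∀ y ∈ (nbrF T hT x).filter (fun y => ¬y ≠ []),
        T.step p x y * avoidProb T hT p [] j y = 0 := by
      intro y hy
      rw [not_not.mp (Finset.mem_filter.mp hy).2, avoidProb_self, mul_zero]
    rw [Finset.sum_eq_zero hroot, add_zero]
    exact Finset.sum_congr rfl fun y hy => by rw [ih (Finset.mem_filter.mp hy).2]

lemma noReturnProb_zero (hT : T.LocFin) : T.noReturnProb p 0 = 1 := noReturnSum_zero hT []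

lemma noReturnProb_succ (M : ℕ) :
    T.noReturnProb p (M + 1) = stepExpect T hT p (avoidProb T hT p [] M) [] := by
  rw [noReturnProb_eq_noReturnSum, noReturnSum_succ hT, stepExpect, Finset.filter_true_of_mem]
  · exact Finset.sum_congr rfl fun y hy => by
      rw [avoidProb_nil_eq_noReturnSum M (ne_of_mem_nbrF_nil hy)]
  · exact fun y hy => ne_of_mem_nbrF_nil hy

end Avoid

section Monotonicity

lemma avoidProb_le_avoidProb_append (hp : 0 ≤ p) :
    ∀ (j : ℕ) {x : List A} {a : A}, x ++ [a] ∈ T.mem →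
      avoidProb T hT p [] j x ≤ avoidProb T hT p [] j (x ++ [a])
  | 0, x, a, _ => by
    rw [avoidProb_zero (x := x ++ [a]) (by simp)]
    exact avoidProb_le_one hp [] 0 x
  | j + 1, x, a, ha => by
    rcases eq_or_ne x [] with rfl | hne
    · rw [avoidProb_self]
      exact avoidProb_nonneg hp [] _ _
    have hxa : x ++ [a] ≠ [] := by simp
    have hchildren : ∀ c ∈ childF T hT (x ++ [a]),
        avoidProb T hT p [] j (x ++ [a]) ≤ avoidProb T hT p [] j c := by
      intro c hc
      obtain ⟨b, hb, rfl⟩ := mem_childF.mp hc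
      exact avoidProb_le_avoidProb_append hp j hb
    have hparent : avoidProb T hT p [] j x ≤ avoidProb T hT p [] j (x ++ [a]) :=
      avoidProb_le_avoidProb_append hp j ha
    calc avoidProb T hT p [] (j + 1) x
        ≤ avoidProb T hT p [] j x := avoidProb_succ_le hp [] j x
      _ = stepExpect T hT p (fun _ => avoidProb T hT p [] j x) (x ++ [a]) := by
        rw [stepExpect_const, sum_step_eq_one hp ha hxa, one_mul]
      _ ≤ stepExpect T hT p (avoidProb T hT p [] j) (x ++ [a]) := by
        refine stepExpect_mono hp fun y hy => ?_
        rcases mem_nbrF.mp hy with hy | ⟨-, rfl⟩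
        · exact hparent.trans (hchildren y hy)
        · rw [List.dropLast_concat]
      _ = avoidProb T hT p [] (j + 1) (x ++ [a]) := (avoidProb_succ hxa j).symm

lemma avoidProb_le_of_prefix (hp : 0 ≤ p) (j : ℕ) {u x : List A} (hx : x ∈ T.mem)
    (hux : u <+: x) : avoidProb T hT p [] j u ≤ avoidProb T hT p [] j x := by
  induction x using List.reverseRecOn with
  | nil => rw [List.prefix_nil.mp hux]
  | append_singleton w a ih =>
    rcases List.prefix_concat_iff.mp hux with rfl | huw
    · rfl
    · exact (ih (T.parent_mem w a hx) huw).trans (avoidProb_le_avoidProb_append hp j hx)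

lemma avoidProb_mono_param {q : ℝ} (hp : 0 ≤ p) (hpq : p ≤ q) :
    ∀ (j : ℕ) {x : List A}, x ∈ T.mem → avoidProb T hT p [] j x ≤ avoidProb T hT q [] j x
  | 0, x, _ => by
    rcases eq_or_ne x [] with rfl | hx
    · simp
    · rw [avoidProb_zero hx, avoidProb_zero hx]
  | j + 1, x, hx => by
    have hq : 0 ≤ q := hp.trans hpq
    rcases eq_or_ne x [] with rfl | hne
    · simp
    rw [avoidProb_succ hne, avoidProb_succ hne, stepExpect_eq_div hp hx hne,
      stepExpect_eq_div hq hx hne]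
    set k : ℝ := (T.numChildren x : ℝ)
    set a := avoidProb T hT q [] j x.dropLast
    set s := ∑ c ∈ childF T hT x, avoidProb T hT q [] j c
    have ha : avoidProb T hT p [] j x.dropLast ≤ a :=
      avoidProb_mono_param hp hpq j (dropLast_mem hx hne)
    have hs : ∑ c ∈ childF T hT x, avoidProb T hT p [] j c ≤ s :=
      Finset.sum_le_sum fun c hc => avoidProb_mono_param hp hpq j (mem_of_mem_childF hc)
    have hka : k * a ≤ s := by
      have hle : ∀ c ∈ childF T hT x, a ≤ avoidProb T hT q [] j c := fun c hc =>
        avoidProb_le_of_prefix hq j (mem_of_mem_childF hc)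
          ((List.dropLast_prefix x).trans (by obtain ⟨b, -, rfl⟩ := mem_childF.mp hc; simp))
      simpa [k, card_childF hx] using Finset.card_nsmul_le_sum _ _ a hle
    have hs0 : 0 ≤ s := Finset.sum_nonneg fun c _ => avoidProb_nonneg hq [] j c
    have hdp : 0 < 1 + k * p := by positivity
    have hdq : 0 < 1 + k * q := by positivity
    calc (avoidProb T hT p [] j x.dropLast + p * ∑ c ∈ childF T hT x, avoidProb T hT p [] j c)
          / (1 + k * p)
        ≤ (a + p * s) / (1 + k * p) := by gcongr
      _ ≤ (a + q * s) / (1 + k * q) := by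
        rw [div_le_div_iff₀ hdp hdq]
        nlinarith [mul_nonneg (sub_nonneg.mpr hpq) (sub_nonneg.mpr hka)]

end Monotonicity

section NoReturn

lemma noReturnProb_nonneg (hT : T.LocFin) (hp : 0 ≤ p) (M : ℕ) : 0 ≤ T.noReturnProb p M := by
  cases M with
  | zero => rw [noReturnProb_zero hT]; exact zero_le_one
  | succ M =>
    rw [noReturnProb_succ (hT := hT)]
    exact stepExpect_nonneg hp fun y _ => avoidProb_nonneg hp [] M y

lemma noReturnProb_antitone (hT : T.LocFin) (hp : 0 ≤ p) : Antitone (T.noReturnProb p) := by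
  refine antitone_nat_of_succ_le fun M => ?_
  cases M with
  | zero =>
    rw [noReturnProb_zero hT, noReturnProb_succ (hT := hT)]
    exact stepExpect_le hp zero_le_one fun y _ => avoidProb_le_one hp [] 0 y
  | succ M =>
    rw [noReturnProb_succ (hT := hT), noReturnProb_succ (hT := hT)]
    exact stepExpect_mono hp fun y _ => avoidProb_succ_le hp [] M y

lemma escProb_le_noReturnProb (hT : T.LocFin) (hp : 0 ≤ p) (M : ℕ) : T.escProb p ≤ T.noReturnProb p M :=
  ciInf_le ⟨0, Set.forall_mem_range.mpr (noReturnProb_nonneg hT hp)⟩ M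

lemma stepExpect_nil_eq (q : ℝ) (f : List A → ℝ) :
    stepExpect T hT p f [] = stepExpect T hT q f [] := by
  refine Finset.sum_congr rfl fun y hy => ?_
  obtain ⟨a, ha, rfl⟩ := mem_childF.mp (nbrF_nil ▸ hy)
  rw [List.nil_append, step_root_child ha, step_root_child ha]

lemma noReturnProb_mono_param (hT : T.LocFin) {q : ℝ} (hp : 0 ≤ p) (hpq : p ≤ q) (M : ℕ) :
    T.noReturnProb p M ≤ T.noReturnProb q M := by
  cases M with
  | zero => rw [noReturnProb_zero hT, noReturnProb_zero hT]
  | succ M =>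
    rw [noReturnProb_succ (hT := hT), noReturnProb_succ (hT := hT), stepExpect_nil_eq q]
    exact stepExpect_mono (hp.trans hpq) fun y hy =>
      avoidProb_mono_param hp hpq M (mem_of_mem_nbrF T.root_mem hy)

lemma escProb_mono_param (hT : T.LocFin) {q : ℝ} (hp : 0 ≤ p) (hpq : p ≤ q) :
    T.escProb p ≤ T.escProb q :=
  le_ciInf fun M =>
    (escProb_le_noReturnProb hT hp M).trans (noReturnProb_mono_param hT hp hpq M)

lemma continuousAt_step {q₀ : ℝ} (hq₀ : 0 ≤ q₀) (x y : List A) :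
    ContinuousAt (fun q => T.step q x y) q₀ := by
  have hden : 1 + (T.numChildren x : ℝ) * q₀ ≠ 0 := by positivity
  unfold step
  split_ifs <;> fun_prop (disch := exact hden)

lemma continuousAt_stepExpect {q₀ : ℝ} (hq₀ : 0 ≤ q₀) {f : ℝ → List A → ℝ} (x : List A)
    (hf : ∀ y, ContinuousAt (fun q => f q y) q₀) :
    ContinuousAt (fun q => stepExpect T hT q (f q) x) q₀ :=
  tendsto_finsetSum _ fun y _ => (continuousAt_step hq₀ x y).mul (hf y)

lemma continuousAt_avoidProb {q₀ : ℝ} (hq₀ : 0 ≤ q₀) (u : List A) :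
    ∀ (j : ℕ) (x : List A), ContinuousAt (fun q => avoidProb T hT q u j x) q₀
  | 0, x => by simp only [avoidProb]; exact continuousAt_const
  | j + 1, x => by
    rcases eq_or_ne x u with rfl | hx
    · simpa using continuousAt_const
    · simp only [avoidProb_succ hx]
      exact continuousAt_stepExpect hq₀ x fun y => continuousAt_avoidProb hq₀ u j y

lemma continuousAt_noReturnProb (hT : T.LocFin) {q₀ : ℝ} (hq₀ : 0 ≤ q₀) (M : ℕ) :
    ContinuousAt (fun q => T.noReturnProb q M) q₀ := by
  cases M with
  | zero => simpa only [noReturnProb_zero hT] using continuousAt_const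
  | succ M =>
    simp only [noReturnProb_succ (hT := hT)]
    exact continuousAt_stepExpect hq₀ [] fun y => continuousAt_avoidProb hq₀ [] M y

end NoReturn

section Subtree

lemma mem_subtree {u z : List A} (hz : z ≠ []) : z ∈ (T.subtree u).mem ↔ u ++ z ∈ T.mem := by
  simp [subtree, hz]

lemma subtree_locFin (hT : T.LocFin) (u : List A) : (T.subtree u).LocFin := by
  intro z _
  have hset : {a : A | z ++ [a] ∈ (T.subtree u).mem} = {a : A | (u ++ z) ++ [a] ∈ T.mem} := by
    ext a
    simp only [Set.mem_ofPred_eq, mem_subtree (List.append_ne_nil_of_right_ne_nil z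
      (List.cons_ne_nil a [])), List.append_assoc]
  by_cases h : u ++ z ∈ T.mem
  · rw [hset]
    exact hT _ h
  · rw [hset, show {a : A | (u ++ z) ++ [a] ∈ T.mem} = ∅ from
      Set.eq_empty_of_forall_notMem fun a ha => h (T.parent_mem _ a ha)]
    exact Set.finite_empty

lemma numChildren_subtree (u z : List A) :
    (T.subtree u).numChildren z = T.numChildren (u ++ z) := by
  unfold numChildren
  congr 1
  ext a
  rw [Set.mem_ofPred_eq, Set.mem_ofPred_eq, mem_subtree (by simp), List.append_assoc]

lemma step_subtree {u z w : List A} (hz : z ≠ []) (hw : w ≠ []) :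
    (T.subtree u).step p z w = T.step p (u ++ z) (u ++ w) := by
  have hchild : (∃ a : A, w = z ++ [a]) ↔ ∃ a : A, u ++ w = (u ++ z) ++ [a] := by
    simp only [List.append_assoc, List.append_cancel_left_eq]
  have hparent : w = z.dropLast ↔ u ++ w = (u ++ z).dropLast := by
    rw [List.dropLast_append_of_ne_nil hz, List.append_cancel_left_eq]
  have huz : u ++ z ≠ [] := by simp [hz]
  simp only [step, mem_subtree hz, mem_subtree hw, hchild, hparent, numChildren_subtree,
    ne_eq, hz, huz, not_false_eq_true, true_and, if_false]

variable (hT) in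
lemma childF_subtree (u z : List A) :
    childF T hT (u ++ z) = ((T.subtree u).childF (subtree_locFin hT u) z).image (u ++ ·) := by
  ext y
  simp only [mem_childF, Finset.mem_image]
  constructor
  · rintro ⟨a, ha, rfl⟩
    exact ⟨z ++ [a], ⟨a, by rwa [mem_subtree (by simp), ← List.append_assoc], rfl⟩,
      by rw [List.append_assoc]⟩
  · rintro ⟨_, ⟨a, ha, rfl⟩, rfl⟩
    rw [mem_subtree (by simp), ← List.append_assoc] at ha
    exact ⟨a, ha, by rw [List.append_assoc]⟩

lemma nbrF_subtree {u z : List A} (hz : z ≠ []) :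
    nbrF T hT (u ++ z) = ((T.subtree u).nbrF (subtree_locFin hT u) z).image (u ++ ·) := by
  rw [nbrF, nbrF, if_neg hz, if_neg (by simp [hz]), Finset.image_union, Finset.image_singleton,
    childF_subtree hT u z, List.dropLast_append_of_ne_nil hz]

lemma avoidProb_subtree {u : List A} :
    ∀ (j : ℕ) {z : List A}, z ≠ [] →
      avoidProb T hT p u j (u ++ z) = avoidProb (T.subtree u) (subtree_locFin hT u) p [] j z
  | 0, z, hz => by
    rw [avoidProb_zero (by simpa using hz), avoidProb_zero hz]
  | j + 1, z, hz => by
    rw [avoidProb_succ (by simpa using hz), avoidProb_succ hz, stepExpect, stepExpect,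
      nbrF_subtree hz, Finset.sum_image fun _ _ _ _ h => List.append_cancel_left h]
    refine Finset.sum_congr rfl fun w hw => ?_
    rcases eq_or_ne w [] with rfl | hw'
    · simp
    · rw [step_subtree hz hw', avoidProb_subtree j hw']

/-- The first step from `u` goes to some child with total probability `k p / (1 + k p)`; from a
child, avoiding `u` is the same as escaping in `T^u`. -/
lemma sum_children_avoidProb (hp : 0 ≤ p) {u : List A} (hne : u ≠ []) (j : ℕ) :
    ∑ c ∈ childF T hT u, T.step p u c * avoidProb T hT p u j c
      = T.numChildren u * p / (1 + T.numChildren u * p)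
        * (T.subtree u).noReturnProb p (j + 1) := by
  have hT' := subtree_locFin hT u
  rw [noReturnProb_succ (hT := hT'), stepExpect, nbrF_nil,
    show childF T hT u = _ from List.append_nil u ▸ childF_subtree hT u [],
    Finset.sum_image fun _ _ _ _ h => List.append_cancel_left h, Finset.mul_sum]
  refine Finset.sum_congr rfl fun w hw => ?_
  obtain ⟨a, ha, rfl⟩ := mem_childF.mp hw
  rw [List.nil_append] at ha ⊢
  have ha' : u ++ [a] ∈ T.mem := (mem_subtree (by simp)).mp ha
  have hk : (T.numChildren u : ℝ) ≠ 0 := by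
    rw [← card_childF (T.parent_mem u a ha') (hT := hT)]
    exact_mod_cast (Finset.card_pos.mpr ⟨_, mem_childF.mpr ⟨a, ha', rfl⟩⟩).ne'
  rw [step_child ha' hne, avoidProb_subtree j (by simp), step_root_child ha,
    numChildren_subtree, List.append_nil]
  have : 0 < 1 + T.numChildren u * p := by positivity
  field_simp

end Subtree

section Hit

variable (T hT p) in
noncomputable def hitProb (t : List A) : ℕ → List A → ℝ
  | 0, x => if x = t then 1 else 0
  | j + 1, x => if x = t then 1 else stepExpect T hT p (hitProb t j) x

@[simp]
lemma hitProb_self (t : List A) (j : ℕ) : hitProb T hT p t j t = 1 := by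
  cases j <;> simp [hitProb]

lemma hitProb_zero {t x : List A} (h : x ≠ t) : hitProb T hT p t 0 x = 0 := by
  simp [hitProb, h]

lemma hitProb_succ {t x : List A} (h : x ≠ t) (j : ℕ) :
    hitProb T hT p t (j + 1) x = stepExpect T hT p (hitProb T hT p t j) x := by
  simp [hitProb, h]

lemma hitProb_nonneg (hp : 0 ≤ p) (t : List A) :
    ∀ (j : ℕ) (x : List A), 0 ≤ hitProb T hT p t j x
  | 0, x => by unfold hitProb; split_ifs <;> norm_num
  | j + 1, x => by
    unfold hitProb
    split_ifs
    · exact zero_le_one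
    · exact stepExpect_nonneg hp fun y _ => hitProb_nonneg hp t j y

lemma hitProb_le_one (hp : 0 ≤ p) (t : List A) :
    ∀ (j : ℕ) (x : List A), hitProb T hT p t j x ≤ 1
  | 0, x => by unfold hitProb; split_ifs <;> norm_num
  | j + 1, x => by
    unfold hitProb
    split_ifs
    · rfl
    · exact stepExpect_le hp zero_le_one fun y _ => hitProb_le_one hp t j y

lemma hitProb_add_avoidProb_le_one (hp : 0 ≤ p) {u : List A} (hne : u ≠ []) :
    ∀ (j : ℕ) {x : List A}, u <+: x → x ≠ u →
      hitProb T hT p u.dropLast j x + avoidProb T hT p u j x ≤ 1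
  | 0, x, hux, hxu => by
    rw [hitProb_zero (ne_dropLast_of_prefix hne hux),
      avoidProb_zero hxu, zero_add]
  | j + 1, x, hux, hxu => by
    rw [hitProb_succ (ne_dropLast_of_prefix hne hux),
      avoidProb_succ hxu, ← stepExpect_add]
    refine stepExpect_le hp zero_le_one fun y hy => ?_
    rcases eq_or_ne y u with rfl | hyu
    · rw [avoidProb_self, add_zero]
      exact hitProb_le_one hp _ j y
    · have huy := (prefix_or_eq_of_mem_nbrF hux hy).resolve_right fun h => hxu h.1
      exact hitProb_add_avoidProb_le_one hp hne j huy hyu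

/-- To return to the root from the subtree of `u`, the walk has to pass through the parent
of `u` first, and from there it has at most `J` steps left. -/
lemma one_sub_avoidProb_le_hitProb_mul (hp : 0 ≤ p) {u : List A} (hne : u ≠ []) {J : ℕ} :
    ∀ j ≤ J, ∀ {x : List A}, x ∈ T.mem → u <+: x →
      1 - avoidProb T hT p [] j x
        ≤ hitProb T hT p u.dropLast j x * (1 - avoidProb T hT p [] J u.dropLast)
  | 0, _, x, _, hux => by
    rw [avoidProb_zero (hux.ne_nil hne), sub_self]
    exact mul_nonneg (hitProb_nonneg hp _ 0 x) (sub_nonneg.mpr (avoidProb_le_one hp [] J _))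
  | j + 1, hj, x, hx, hux => by
    have hxne := hux.ne_nil hne
    rw [avoidProb_succ hxne, hitProb_succ (ne_dropLast_of_prefix hne hux),
      ← stepExpect_one_sub hp hx hxne, ← stepExpect_mul_const]
    refine stepExpect_mono hp fun y hy => ?_
    rcases prefix_or_eq_of_mem_nbrF hux hy with huy | ⟨-, rfl⟩
    · exact one_sub_avoidProb_le_hitProb_mul hp hne j (by omega) (mem_of_mem_nbrF hx hy) huy
    · rw [hitProb_self, one_mul]
      exact sub_le_sub_left (avoidProb_antitone hp [] _ (by omega)) 1

lemma hitProb_parent_le (hp : 0 ≤ p) {u : List A} (hne : u ≠ []) {β : ℝ}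
    (hβ : ∀ j, β ≤ ∑ c ∈ childF T hT u, T.step p u c * avoidProb T hT p u j c) (j : ℕ) :
    hitProb T hT p u.dropLast j u ≤ 1 - β := by
  have hrow := step_parent_add_sum_children_le (hT := hT) hp hne
  have hu' : u ≠ u.dropLast := ne_dropLast_of_prefix hne (List.prefix_refl u)
  cases j with
  | zero =>
    have : ∑ c ∈ childF T hT u, T.step p u c * avoidProb T hT p u 0 c
        ≤ ∑ c ∈ childF T hT u, T.step p u c := Finset.sum_le_sum fun c _ =>
      mul_le_of_le_one_right (step_nonneg T hp u c) (avoidProb_le_one hp u 0 c)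
    linarith [hβ 0, hitProb_zero hu' (T := T) (hT := hT) (p := p), step_nonneg T hp u u.dropLast]
  | succ j =>
    have hchild : ∀ c ∈ childF T hT u, T.step p u c * hitProb T hT p u.dropLast j c
        ≤ T.step p u c * (1 - avoidProb T hT p u j c) := by
      intro c hc
      obtain ⟨a, -, rfl⟩ := mem_childF.mp hc
      refine mul_le_mul_of_nonneg_left ?_ (step_nonneg T hp u _)
      linarith [hitProb_add_avoidProb_le_one hp hne j (List.prefix_append u [a]) (by simp)
        (T := T) (hT := hT)]
    rw [hitProb_succ hu', stepExpect_eq_parent_add_children hne, hitProb_self, mul_one]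
    have := Finset.sum_le_sum hchild
    simp only [mul_sub, mul_one, Finset.sum_sub_distrib] at this
    linarith [hβ j]

lemma one_sub_avoidProb_le_mul (hp : 0 ≤ p) {u : List A} (hu : u ∈ T.mem) (hne : u ≠ [])
    {β : ℝ} (hβ : ∀ j, β ≤ ∑ c ∈ childF T hT u, T.step p u c * avoidProb T hT p u j c)
    (J : ℕ) :
    1 - avoidProb T hT p [] J u ≤ (1 - β) * (1 - avoidProb T hT p [] J u.dropLast) :=
  (one_sub_avoidProb_le_hitProb_mul hp hne J le_rfl hu (List.prefix_refl u)).trans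
    (mul_le_mul_of_nonneg_right (hitProb_parent_le hp hne hβ J)
      (sub_nonneg.mpr (avoidProb_le_one hp [] J _)))

lemma one_sub_avoidProb_le_pow (hp : 0 ≤ p) {β : ℝ} (hβ : β ≤ 1) (J : ℕ) {y : List A}
    (hy : y ∈ T.mem) {S : Finset (List A)}
    (hS : ∀ u ∈ S, u ≠ [] ∧ u <+: y ∧
      1 - avoidProb T hT p [] J u ≤ (1 - β) * (1 - avoidProb T hT p [] J u.dropLast)) :
    1 - avoidProb T hT p [] J y ≤ (1 - β) ^ S.card := by
  induction y using List.reverseRecOn generalizing S with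
  | nil =>
    obtain rfl : S = ∅ := Finset.eq_empty_of_forall_notMem fun u hu =>
      (hS u hu).1 (List.prefix_nil.mp (hS u hu).2.1)
    simp
  | append_singleton w a ih =>
    have hw := T.parent_mem w a hy
    have hS' : ∀ u ∈ S.erase (w ++ [a]), u ≠ [] ∧ u <+: w ∧
        1 - avoidProb T hT p [] J u ≤ (1 - β) * (1 - avoidProb T hT p [] J u.dropLast) := by
      intro u hu
      obtain ⟨hne, hpre, hbound⟩ := hS u (Finset.mem_of_mem_erase hu)
      exact ⟨hne, (List.prefix_concat_iff.mp hpre).resolve_left (Finset.ne_of_mem_erase hu),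
        hbound⟩
    by_cases hmem : w ++ [a] ∈ S
    · rw [← Finset.card_erase_add_one hmem, pow_succ']
      calc 1 - avoidProb T hT p [] J (w ++ [a])
          ≤ (1 - β) * (1 - avoidProb T hT p [] J w) := by
            simpa using (hS _ hmem).2.2
        _ ≤ (1 - β) * (1 - β) ^ (S.erase (w ++ [a])).card :=
            mul_le_mul_of_nonneg_left (ih hw hS') (sub_nonneg.mpr hβ)
    · rw [← Finset.erase_eq_of_notMem hmem]
      exact (sub_le_sub_left (avoidProb_le_avoidProb_append hp J hy) 1).trans (ih hw hS')

end Hit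

section Stay

variable (T hT p) in
noncomputable def stayProb (B : Finset (List A)) : ℕ → List A → ℝ
  | 0, x => if x ∈ B then 1 else 0
  | j + 1, x => if x ∈ B then stepExpect T hT p (stayProb B j) x else 0

lemma stayProb_of_notMem {B : Finset (List A)} {x : List A} (hx : x ∉ B) (j : ℕ) :
    stayProb T hT p B j x = 0 := by
  cases j <;> simp [stayProb, hx]

lemma stayProb_of_mem {B : Finset (List A)} {x : List A} (hx : x ∈ B) (j : ℕ) :
    stayProb T hT p B (j + 1) x = stepExpect T hT p (stayProb T hT p B j) x := by
  simp [stayProb, hx]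

lemma stayProb_nonneg (hp : 0 ≤ p) (B : Finset (List A)) :
    ∀ (j : ℕ) (x : List A), 0 ≤ stayProb T hT p B j x
  | 0, x => by unfold stayProb; split_ifs <;> norm_num
  | j + 1, x => by
    unfold stayProb
    split_ifs
    · exact stepExpect_nonneg hp fun y _ => stayProb_nonneg hp B j y
    · rfl

lemma stayProb_le_one (hp : 0 ≤ p) (B : Finset (List A)) :
    ∀ (j : ℕ) (x : List A), stayProb T hT p B j x ≤ 1
  | 0, x => by unfold stayProb; split_ifs <;> norm_num
  | j + 1, x => by
    unfold stayProb
    split_ifs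
    · exact stepExpect_le hp zero_le_one fun y _ => stayProb_le_one hp B j y
    · exact zero_le_one

lemma stayProb_add_le (hp : 0 ≤ p) {B : Finset (List A)} {q : ℕ} {C : ℝ}
    (h : ∀ y ∈ B, stayProb T hT p B q y ≤ C) :
    ∀ (m : ℕ) (x : List A), stayProb T hT p B (m + q) x ≤ C * stayProb T hT p B m x
  | 0, x => by
    by_cases hx : x ∈ B
    · simpa [stayProb, hx] using h x hx
    · simp [stayProb_of_notMem hx]
  | m + 1, x => by
    by_cases hx : x ∈ B
    · rw [Nat.add_right_comm, stayProb_of_mem hx, stayProb_of_mem hx, mul_comm,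
        ← stepExpect_mul_const]
      exact stepExpect_mono hp fun y _ => (stayProb_add_le hp h m y).trans_eq (mul_comm _ _)
    · simp [stayProb_of_notMem hx]

lemma stayProb_mul_le_pow (hp : 0 ≤ p) {B : Finset (List A)} {q : ℕ} {C : ℝ} (hC : 0 ≤ C)
    (h : ∀ y ∈ B, stayProb T hT p B q y ≤ C) (m : ℕ) (x : List A) :
    stayProb T hT p B (q * m) x ≤ C ^ m := by
  induction m generalizing x with
  | zero => simpa using stayProb_le_one hp B 0 x
  | succ m ih =>
    rw [Nat.mul_succ, pow_succ']
    exact (stayProb_add_le hp h _ x).trans (mul_le_mul_of_nonneg_left (ih x) hC)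

/-- The walk leaves `B` at least by running straight to the root. -/
lemma stayProb_le_one_sub_pow (hp : 0 ≤ p) {B : Finset (List A)} (hB : [] ∉ B) {p₀ : ℝ}
    (hp₀ : 0 ≤ p₀) (hstep : ∀ y ∈ B, p₀ ≤ T.step p y y.dropLast) :
    ∀ (j : ℕ), ∀ y ∈ B, y.length ≤ j → stayProb T hT p B j y ≤ 1 - p₀ ^ j
  | 0, y, hy, hlen => absurd (List.length_eq_zero_iff.mp (Nat.le_zero.mp hlen) ▸ hy) hB
  | j + 1, y, hy, hlen => by
    have hne : y ≠ [] := fun h => hB (h ▸ hy)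
    have hrow := step_parent_add_sum_children_le (hT := hT) hp hne
    have hp₀1 : p₀ ≤ 1 := (hstep y hy).trans (by
      linarith [Finset.sum_nonneg fun c (_ : c ∈ childF T hT y) => step_nonneg T hp y c])
    have hparent : stayProb T hT p B j y.dropLast ≤ 1 - p₀ ^ j := by
      by_cases hpar : y.dropLast ∈ B
      · exact stayProb_le_one_sub_pow hp hB hp₀ hstep j _ hpar (by simp; omega)
      · rw [stayProb_of_notMem hpar, sub_nonneg]
        exact pow_le_one₀ hp₀ hp₀1
    have hchildren : ∑ c ∈ childF T hT y, T.step p y c * stayProb T hT p B j c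
        ≤ ∑ c ∈ childF T hT y, T.step p y c := Finset.sum_le_sum fun c _ =>
      mul_le_of_le_one_right (step_nonneg T hp y c) (stayProb_le_one hp B j c)
    rw [stayProb_of_mem hy, stepExpect_eq_parent_add_children hne, pow_succ']
    nlinarith [mul_le_mul_of_nonneg_left hparent (step_nonneg T hp y y.dropLast),
      mul_le_mul_of_nonneg_right (hstep y hy) (pow_nonneg hp₀ j)]

end Stay

section Konig

lemma exists_child_infinite (hT : T.LocFin) {S : Set (List A)} (hS : S ⊆ T.mem) {x : List A}
    (hx : {v ∈ S | x <+: v}.Infinite) : ∃ a : A, {v ∈ S | x ++ [a] <+: v}.Infinite := by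
  by_contra! hfin
  obtain ⟨v, hvS, hxv⟩ := hx.nonempty
  refine hx (((Set.finite_singleton x).union ((hT x (mem_of_prefix (hS hvS) hxv)).biUnion
    fun a _ => hfin a)).subset ?_)
  rintro w ⟨hwS, t, rfl⟩
  rcases t with _ | ⟨b, t⟩
  · simp
  · have hb : x ++ [b] <+: x ++ b :: t := ⟨t, by simp⟩
    exact Or.inr (Set.mem_biUnion (mem_of_prefix (hS hwS) hb) ⟨hwS, hb⟩)

lemma exists_isRay_subset (hT : T.LocFin) {S : Set (List A)} (hS : S ⊆ T.mem)
    (hpre : ∀ v ∈ S, ∀ u, u <+: v → u ∈ S) (hinf : S.Infinite) :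
    ∃ r, T.IsRay r ∧ ∀ n, r n ∈ S := by
  let next : {x // {v ∈ S | x <+: v}.Infinite} → {x // {v ∈ S | x <+: v}.Infinite} :=
    fun x => ⟨x.1 ++ [(exists_child_infinite hT hS x.2).choose],
      (exists_child_infinite hT hS x.2).choose_spec⟩
  let r : ℕ → {x // {v ∈ S | x <+: v}.Infinite} :=
    fun n => next^[n] ⟨[], by simpa using hinf⟩
  have hr : ∀ n, (r n).1 ∈ S := fun n => by
    obtain ⟨v, hvS, hv⟩ := (r n).2.nonempty
    exact hpre v hvS _ hv
  refine ⟨fun n => (r n).1, ⟨rfl, fun n => ⟨hS (hr n), ?_⟩⟩, hr⟩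
  exact ⟨_, by simp only [r, Function.iterate_succ_apply']; rfl⟩

lemma finite_setOf_forall_prefix_notMem (hT : T.LocFin) {c : Set (List A)}
    (hc : T.IsVCutset c) : {v ∈ T.mem | ∀ u, u <+: v → u ∉ c}.Finite := by
  by_contra hinf
  obtain ⟨r, hray, hr⟩ := exists_isRay_subset hT (S := {v ∈ T.mem | ∀ u, u <+: v → u ∉ c})
    (fun v hv => hv.1)
    (fun v hv u huv => ⟨mem_of_prefix hv.1 huv, fun w hwu => hv.2 w (hwu.trans huv)⟩) hinf
  obtain ⟨n, hn⟩ := hc.2 r hray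
  exact (hr n).2 (r n) (List.prefix_refl _) hn

end Konig

section TailBound

lemma numChildren_nil_pos (hT : T.LocFin) (hp : 0 ≤ p) (h : 0 < T.escProb p) :
    0 < T.numChildren [] := by
  by_contra h0
  have hleaf : childF T hT [] = ∅ := by
    rw [← Finset.card_eq_zero, card_childF T.root_mem]
    omega
  have := escProb_le_noReturnProb hT hp 1
  rw [noReturnProb_succ (hT := hT), stepExpect, nbrF_nil, hleaf, Finset.sum_empty] at this
  linarith

/-- `p₀ / (1 + p₀)` bounds the probability `k p / (1 + k p)` of stepping into the subtree. -/
lemma one_sub_avoidProb_le_of_le_escProb_subtree {p₀ α : ℝ} (hp₀ : 0 < p₀) (hp : p₀ ≤ p)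
    {u : List A} (hu : u ∈ T.mem) (hne : u ≠ []) (hα : 0 < α)
    (hesc : α ≤ (T.subtree u).escProb p₀) (J : ℕ) :
    1 - avoidProb T hT p [] J u
      ≤ (1 - p₀ / (1 + p₀) * α) * (1 - avoidProb T hT p [] J u.dropLast) := by
  have hT' := subtree_locFin hT u
  have hp' : 0 ≤ p := hp₀.le.trans hp
  have hk : (1 : ℝ) ≤ T.numChildren u := by
    have := numChildren_nil_pos hT' hp₀.le (hα.trans_le hesc)
    rw [numChildren_subtree, List.append_nil] at this
    exact_mod_cast this
  refine one_sub_avoidProb_le_mul hp' hu hne (fun j => ?_) J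
  rw [sum_children_avoidProb hp' hne]
  have hfirst : p₀ / (1 + p₀) ≤ T.numChildren u * p / (1 + T.numChildren u * p) := by
    rw [div_le_div_iff₀ (by positivity) (by positivity)]
    nlinarith [mul_le_mul hk hp hp₀.le (by positivity)]
  have hescape : α ≤ (T.subtree u).noReturnProb p (j + 1) :=
    hesc.trans ((escProb_mono_param hT' hp₀.le hp).trans
      (escProb_le_noReturnProb hT' hp' _))
  exact mul_le_mul hfirst hescape hα.le (by positivity)

lemma avoidProb_sub_avoidProb_le (hp : 0 ≤ p) {B : Finset (List A)} {ε : ℝ} (hε : 0 ≤ ε)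
    (hout : ∀ y ∈ T.mem, y ≠ [] → y ∉ B → ∀ i, 1 - avoidProb T hT p [] i y ≤ ε) :
    ∀ (j d : ℕ) {x : List A}, x ∈ T.mem →
      avoidProb T hT p [] j x - avoidProb T hT p [] (j + d) x ≤ stayProb T hT p B j x + ε := by
  intro j d x hx
  have hstay := stayProb_nonneg (hT := hT) hp B j x
  rcases eq_or_ne x [] with rfl | hne
  · simp only [avoidProb_self, sub_self]
    positivity
  by_cases hxB : x ∉ B
  · linarith [avoidProb_le_one (hT := hT) hp [] j x, hout x hx hne hxB (j + d)]
  rw [not_not] at hxB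
  cases j with
  | zero =>
    rw [avoidProb_zero hne, stayProb, if_pos hxB]
    linarith [avoidProb_nonneg (hT := hT) hp [] (0 + d) x]
  | succ j =>
    rw [Nat.add_right_comm, avoidProb_succ hne, avoidProb_succ hne, stayProb_of_mem hxB,
      ← stepExpect_sub]
    calc stepExpect T hT p (fun y => avoidProb T hT p [] j y - avoidProb T hT p [] (j + d) y) x
        ≤ stepExpect T hT p (fun y => stayProb T hT p B j y + ε) x :=
          stepExpect_mono hp fun y hy =>
            avoidProb_sub_avoidProb_le hp hε hout j d (mem_of_mem_nbrF hx hy)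
      _ ≤ stepExpect T hT p (stayProb T hT p B j) x + ε := by
          rw [stepExpect_add, stepExpect_const]
          gcongr
          exact mul_le_of_le_one_left hε (sum_step_le_one hp x)

/-- A late return to the root happens only if the walk is still in `B` at time `j`, or if it
returns from a vertex outside `B`. -/
lemma noReturnProb_sub_noReturnProb_le (hp : 0 ≤ p) {B : Finset (List A)} {ε C : ℝ}
    (hε : 0 ≤ ε) (hout : ∀ y ∈ T.mem, y ≠ [] → y ∉ B → ∀ i, 1 - avoidProb T hT p [] i y ≤ ε)
    {j : ℕ} (hC : ∀ y, stayProb T hT p B j y ≤ C) (d : ℕ) :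
    T.noReturnProb p (j + 1) - T.noReturnProb p (j + 1 + d) ≤ C + ε := by
  have hC0 : 0 ≤ C := (stayProb_nonneg hp B j []).trans (hC [])
  rw [Nat.add_right_comm, noReturnProb_succ (hT := hT), noReturnProb_succ (hT := hT),
    ← stepExpect_sub]
  exact stepExpect_le hp (add_nonneg hC0 hε) fun y hy =>
    (avoidProb_sub_avoidProb_le hp hε hout j d (mem_of_mem_nbrF T.root_mem hy)).trans
      (by linarith [hC y])

lemma noReturnProb_sub_le_escProb (hT : T.LocFin) (hp : 0 ≤ p) {M : ℕ} {δ : ℝ}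
    (h : ∀ d, T.noReturnProb p M - T.noReturnProb p (M + d) ≤ δ) :
    T.noReturnProb p M - δ ≤ T.escProb p := by
  refine le_ciInf fun N => show _ ≤ T.noReturnProb p N from ?_
  rcases le_or_gt N M with hNM | hMN
  · have h0 : T.noReturnProb p M - T.noReturnProb p M ≤ δ := h 0
    linarith [noReturnProb_antitone hT hp hNM]
  · obtain ⟨d, rfl⟩ := Nat.exists_eq_add_of_le hMN.le
    linarith [h d]

end TailBound

section Continuity

lemma one_sub_avoidProb_le_pow_of_cutsets (hp : 0 ≤ p) {β : ℝ} (hβ₀ : 0 ≤ β) (hβ₁ : β ≤ 1)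
    {c : ℕ → Set (List A)} (hdisj : Pairwise fun i j => Disjoint (c i) (c j))
    (hgood : ∀ m, ∀ u ∈ c m, u ≠ [] → ∀ J,
      1 - avoidProb T hT p [] J u ≤ (1 - β) * (1 - avoidProb T hT p [] J u.dropLast))
    {n : ℕ} {y : List A} (hy : y ∈ T.mem) (hpre : ∀ m ≤ n, ∃ u ∈ c m, u <+: y) (J : ℕ) :
    1 - avoidProb T hT p [] J y ≤ (1 - β) ^ n := by
  choose! f hfc hfy using hpre
  have hinj : Set.InjOn f (Finset.range (n + 1)) := by
    intro m₁ h₁ m₂ h₂ heq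
    by_contra hne
    have h₁ : m₁ ≤ n := Nat.lt_succ_iff.mp (Finset.mem_range.mp h₁)
    have h₂ : m₂ ≤ n := Nat.lt_succ_iff.mp (Finset.mem_range.mp h₂)
    exact Set.disjoint_left.mp (hdisj hne) (hfc m₁ h₁) (heq ▸ hfc m₂ h₂)
  have hcard : n ≤ (((Finset.range (n + 1)).image f).erase []).card := by
    have := Finset.pred_card_le_card_erase (s := (Finset.range (n + 1)).image f) (a := [])
    rw [Finset.card_image_of_injOn hinj, Finset.card_range] at this
    omega
  have hS : ∀ u ∈ ((Finset.range (n + 1)).image f).erase [], u ≠ [] ∧ u <+: y ∧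
      1 - avoidProb T hT p [] J u ≤ (1 - β) * (1 - avoidProb T hT p [] J u.dropLast) := by
    intro u hu
    obtain ⟨hne, hu⟩ := Finset.mem_erase.mp hu
    obtain ⟨m, hm, rfl⟩ := Finset.mem_image.mp hu
    have hm : m ≤ n := Nat.lt_succ_iff.mp (Finset.mem_range.mp hm)
    exact ⟨hne, hfy m hm, hgood m _ (hfc m hm) hne J⟩
  exact (one_sub_avoidProb_le_pow hp hβ₁ J hy hS).trans
    (pow_le_pow_of_le_one (by linarith) (by linarith) hcard)

/-- For `p ≤ q`, each step towards the root from a vertex of `B` has probability at least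
`1 / (1 + K q)`, with `K` the largest number of children in `B`. -/
lemma exists_stayProb_le {B : Finset (List A)} (hB : [] ∉ B) (hBT : ∀ y ∈ B, y ∈ T.mem)
    {q ε : ℝ} (hq : 0 ≤ q) (hε : 0 < ε) :
    ∃ j, ∀ p ∈ Set.Icc 0 q, ∀ y, stayProb T hT p B j y ≤ ε := by
  set K := B.sup T.numChildren
  set R := B.sup List.length
  set p₀ := 1 / (1 + K * q)
  have hp₀ : 0 < p₀ := by positivity
  have hp₀1 : p₀ ≤ 1 := div_le_one_of_le₀ (by nlinarith [Nat.cast_nonneg (α := ℝ) K]) (by positivity)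
  obtain ⟨m, hm⟩ := exists_pow_lt_of_lt_one hε
    (sub_lt_self 1 (pow_pos hp₀ R) : 1 - p₀ ^ R < 1)
  refine ⟨R * m, fun p hp y => (stayProb_mul_le_pow hp.1 (sub_nonneg.mpr (pow_le_one₀ hp₀.le hp₀1))
    (fun y hy => ?_) m y).trans hm.le⟩
  refine stayProb_le_one_sub_pow hp.1 hB hp₀.le (fun z hz => ?_) R y hy (Finset.le_sup hy)
  rw [step_parent (hBT z hz) (fun h => hB (h ▸ hz))]
  have hk : (T.numChildren z : ℝ) ≤ K := by exact_mod_cast Finset.le_sup (f := T.numChildren) hz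
  have := hp.1
  exact one_div_le_one_div_of_le (by positivity)
    (by nlinarith [mul_le_mul hk hp.2 hp.1 (Nat.cast_nonneg K)])

lemma lambdaC_nonneg : 0 ≤ T.lambdaC := by
  have : 0 ≤ T.br := Real.sSup_nonneg fun x hx => zero_le_one.trans hx.1
  unfold lambdaC
  positivity

lemma exists_noReturnProb_sub_le_escProb (hT : T.LocFin) (hwut : T.WeaklyUniformlyTransient)
    {p₀ q : ℝ} (hp₀ : T.lambdaC < p₀) (hp₀q : p₀ ≤ q) {ε : ℝ} (hε : 0 < ε) :
    ∃ M, ∀ p ∈ Set.Icc p₀ q, T.noReturnProb p M - ε ≤ T.escProb p := by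
  obtain ⟨c, hc, hdisj, hα⟩ := hwut
  have hp₀pos : 0 < p₀ := lambdaC_nonneg.trans_lt hp₀
  obtain ⟨α, hα₀, hαc⟩ := hα p₀ hp₀
  set β := p₀ / (1 + p₀) * min α 1
  have hβ₀ : 0 < β := by positivity
  have hβ₁ : β ≤ 1 :=
    mul_le_one₀ (div_le_one_of_le₀ (by linarith) (by positivity)) (by positivity) (min_le_right _ _)
  obtain ⟨n, hn⟩ := exists_pow_lt_of_lt_one (half_pos hε) (sub_lt_self 1 hβ₀)
  have hfin : (⋃ m ∈ Finset.range (n + 1), {v ∈ T.mem | ∀ u, u <+: v → u ∉ c m}).Finite :=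
    (Finset.finite_toSet _).biUnion fun m _ => finite_setOf_forall_prefix_notMem hT (hc m).1
  set B := hfin.toFinset.erase []
  obtain ⟨j, hj⟩ := exists_stayProb_le (hT := hT) (B := B) (Finset.notMem_erase [] _)
    (fun y hy => by
      obtain ⟨m, -, hy⟩ := Set.mem_iUnion₂.mp (hfin.mem_toFinset.mp (Finset.mem_of_mem_erase hy))
      exact hy.1)
    (hp₀pos.le.trans hp₀q) (half_pos hε)
  refine ⟨j + 1, fun p hp => ?_⟩
  have hp0 : 0 ≤ p := hp₀pos.le.trans hp.1
  have hgood : ∀ m, ∀ u ∈ c m, u ≠ [] → ∀ J,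
      1 - avoidProb T hT p [] J u ≤ (1 - β) * (1 - avoidProb T hT p [] J u.dropLast) :=
    fun m u hu hne => one_sub_avoidProb_le_of_le_escProb_subtree hp₀pos hp.1 ((hc m).1.1 u hu)
      hne (lt_min hα₀ one_pos) ((min_le_left _ _).trans (hαc m u hu))
  have hout : ∀ y ∈ T.mem, y ≠ [] → y ∉ B → ∀ i,
      1 - avoidProb T hT p [] i y ≤ (1 - β) ^ n := by
    refine fun y hy hne hyB =>
      one_sub_avoidProb_le_pow_of_cutsets hp0 hβ₀.le hβ₁ hdisj hgood hy fun m hm => ?_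
    by_contra! hnone
    refine hyB (Finset.mem_erase.mpr ⟨hne, hfin.mem_toFinset.mpr ?_⟩)
    exact Set.mem_biUnion (Finset.mem_range.mpr (Nat.lt_succ_of_le hm))
      ⟨hy, fun u hu huc => hnone u huc hu⟩
  refine noReturnProb_sub_le_escProb hT hp0 fun d => ?_
  linarith [noReturnProb_sub_noReturnProb_le hp0 (pow_nonneg (by linarith) n) hout
    (fun y => hj p ⟨hp0, hp.2⟩ y) d]

end Continuity

lemma continuousWithinAt_escProb (hT : T.LocFin) (hwut : T.WeaklyUniformlyTransient) {q : ℝ}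
    (hq : T.lambdaC < q) : ContinuousWithinAt T.escProb (Set.Iic q) q := by
  obtain ⟨p₀, hp₀, hp₀q⟩ := exists_between hq
  have hp₀pos : 0 < p₀ := lambdaC_nonneg.trans_lt hp₀
  exact continuousWithinAt_Iic_of_uniform_approx hp₀q
    (fun x hx => escProb_mono_param hT (hp₀pos.le.trans hx.1) hx.2)
    (continuousAt_noReturnProb hT (hp₀pos.trans hp₀q).le)
    (escProb_le_noReturnProb hT (hp₀pos.trans hp₀q).le)
    fun ε hε => exists_noReturnProb_sub_le_escProb hT hwut hp₀ hp₀q.le hε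

end RTree

theorem conductance_left_continuous_of_weakly_uniformly_transient_general (A : Type) (T : RTree A)
    (hlf : T.LocFin)
    (hwut : T.WeaklyUniformlyTransient)
    (lam : ℝ) (hlam : T.lambdaC < lam) :
    ContinuousWithinAt (fun x => T.conductance x) (Set.Iic lam) lam :=
  (continuousWithinAt_id.mul continuousWithinAt_const).mul
    (RTree.continuousWithinAt_escProb hlf hwut hlam)

/-- For any infinite, locally finite rooted tree `T` that is weakly
uniformly transient, the function `λ ↦ C(λ,T)` is left continuous on `(λ_c(T), 1]`. -/
theorem conductance_left_continuous_of_weakly_uniformly_transient (A : Type) (T : RTree A)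
    (hinf : T.mem.Infinite) (hlf : T.LocFin)
    (hwut : T.WeaklyUniformlyTransient)
    (lam : ℝ) (hlam : T.lambdaC < lam) (hlam1 : lam ≤ 1) :
    ContinuousWithinAt (fun x => T.conductance x) (Set.Iic lam) lam :=
  conductance_left_continuous_of_weakly_uniformly_transient_general A T hlf hwut lam hlam
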